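/- arXiv:2006.10929 — 2 statements merged into one kernel-verified Lean document; each statement's English description precedes it below -/
import Mathlib

section
/- Let Q : Z^n → P(H) be a measurable probability kernel, D a probability distribution on Z, S ∼ D^n, and let P* = E_{S∼D^n}[Q(S)] be the mixture distribution defined by P*(B) = E_{S∼D^n}[Q(S)(B)]. Then for every probability distribution P' on H, E_{S∼D^n}[KL(Q(S)‖P*)] ≤ E_{S∼D^n}[KL(Q(S)‖P')]; that is, the expected KL divergence from the posterior to a fixed prior is minimized by the expected posterior. -/
open MeasureTheory Set
open scoped ENNReal NNReal

-- Kullback–Leibler divergence, valued in `ℝ≥0∞`: equal to `∫ log(dQ/dP) dQ` when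
-- `Q ≪ P` and this integral is well defined, and `∞` otherwise.
open Classical in
noncomputable def klDivE {H : Type*} [MeasurableSpace H] (Q P : Measure H) : ℝ≥0∞ :=
  if Q ≪ P ∧ Integrable (llr Q P) Q
  then ENNReal.ofReal (∫ h, llr Q P h ∂Q)
  else ⊤

/-!
Write `P = E_S[Q S]` and `g = log (dP/dP')`. For every sample `S` the chain rule
`log (dQ_S/dP') = log (dQ_S/dP) + g` gives
`KL(Q_S‖P) + E_{Q_S}[g⁺] = KL(Q_S‖P') + E_{Q_S}[g⁻]`. Averaging over `S` turns the
`Q_S`-expectations of `g⁺` and `g⁻` into `P`-expectations, and Gibbs' inequality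
`E_P[g⁻] ≤ E_P[g⁺]`, with `E_P[g⁻] ≤ 1`, lets us cancel them.
Splitting every log-likelihood ratio into its positive and negative parts keeps all identities
in `ℝ≥0∞`, so no integrability assumption is needed anywhere.
-/

section

variable {α : Type*} {mα : MeasurableSpace α} {μ ν ρ : Measure α}

lemma integrable_of_lintegral_ofReal_ne_top {f : α → ℝ} (hf : AEMeasurable f μ)
    (hpos : ∫⁻ x, ENNReal.ofReal (f x) ∂μ ≠ ∞) (hneg : ∫⁻ x, ENNReal.ofReal (-f x) ∂μ ≠ ∞) :
    Integrable f μ := by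
  refine ((integrable_toReal_of_lintegral_ne_top hf.ennreal_ofReal hpos).sub
    (integrable_toReal_of_lintegral_ne_top hf.neg.ennreal_ofReal hneg)).congr
    (ae_of_all _ fun x => ?_)
  simp only [ENNReal.toReal_ofReal']
  exact max_zero_sub_max_neg_zero_eq_self (f x)

lemma ofReal_add_ofReal_neg_add_ofReal_neg {a b c : ℝ} (h : a = b + c) :
    ENNReal.ofReal a + ENNReal.ofReal (-b) + ENNReal.ofReal (-c)
      = ENNReal.ofReal (-a) + ENNReal.ofReal b + ENNReal.ofReal c := by
  rw [← ENNReal.toReal_eq_toReal_iff' (by finiteness) (by finiteness)]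
  simp only [ENNReal.toReal_add, ENNReal.ofReal_ne_top, ne_eq, not_false_eq_true,
    ENNReal.add_ne_top, and_self, ENNReal.toReal_ofReal']
  linarith [max_zero_sub_max_neg_zero_eq_self a, max_zero_sub_max_neg_zero_eq_self b,
    max_zero_sub_max_neg_zero_eq_self c]

lemma lintegral_ofReal_neg_llr_le [SigmaFinite μ] [SigmaFinite ν] (h : μ ≪ ν) :
    ∫⁻ x, ENNReal.ofReal (-llr μ ν x) ∂μ ≤ ν univ := by
  calc ∫⁻ x, ENNReal.ofReal (-llr μ ν x) ∂μ
      ≤ ∫⁻ x, ν.rnDeriv μ x ∂μ := by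
        refine lintegral_mono_ae ?_
        filter_upwards [exp_neg_llr h] with x hx
        calc ENNReal.ofReal (-llr μ ν x)
            ≤ ENNReal.ofReal (Real.exp (-llr μ ν x)) :=
              ENNReal.ofReal_le_ofReal ((le_add_of_nonneg_right zero_le_one).trans
                (Real.add_one_le_exp _))
          _ = ENNReal.ofReal (ν.rnDeriv μ x).toReal := by rw [hx]
          _ ≤ ν.rnDeriv μ x := ENNReal.ofReal_toReal_le
    _ ≤ ν univ := Measure.lintegral_rnDeriv_le

lemma lintegral_ofReal_neg_llr_ne_top [SigmaFinite μ] [IsFiniteMeasure ν] (h : μ ≪ ν) :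
    ∫⁻ x, ENNReal.ofReal (-llr μ ν x) ∂μ ≠ ∞ :=
  ((lintegral_ofReal_neg_llr_le h).trans_lt (measure_lt_top ν _)).ne

lemma integrable_llr_of_lintegral_ofReal_ne_top [SigmaFinite μ] [IsFiniteMeasure ν] (h : μ ≪ ν)
    (hpos : ∫⁻ x, ENNReal.ofReal (llr μ ν x) ∂μ ≠ ∞) : Integrable (llr μ ν) μ :=
  integrable_of_lintegral_ofReal_ne_top (measurable_llr μ ν).aemeasurable hpos
    (lintegral_ofReal_neg_llr_ne_top h)

lemma lintegral_ofReal_neg_llr_le_lintegral_ofReal_llr [IsProbabilityMeasure μ]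
    [IsProbabilityMeasure ν] (h : μ ≪ ν) :
    ∫⁻ x, ENNReal.ofReal (-llr μ ν x) ∂μ ≤ ∫⁻ x, ENNReal.ofReal (llr μ ν x) ∂μ := by
  by_cases hpos : ∫⁻ x, ENNReal.ofReal (llr μ ν x) ∂μ = ∞
  · exact hpos ▸ le_top
  have hint := integrable_llr_of_lintegral_ofReal_ne_top h hpos
  have hgibbs : 0 ≤ ∫ x, llr μ ν x ∂μ := by
    simpa using InformationTheory.integral_llr_add_sub_measure_univ_nonneg h hint
  rw [integral_eq_lintegral_pos_part_sub_lintegral_neg_part hint, sub_nonneg] at hgibbs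
  exact (ENNReal.toReal_le_toReal (lintegral_ofReal_neg_llr_ne_top h) hpos).1 hgibbs

lemma llr_ae_eq_llr_add_llr [SigmaFinite μ] [SigmaFinite ν] [SigmaFinite ρ] (hμν : μ ≪ ν)
    (hνρ : ν ≪ ρ) : llr μ ρ =ᵐ[μ] fun x => llr μ ν x + llr ν ρ x := by
  filter_upwards [Measure.rnDeriv_pos hμν, hμν.ae_le (Measure.rnDeriv_lt_top μ ν),
    hμν.ae_le (Measure.rnDeriv_pos hνρ), (hμν.trans hνρ).ae_le (Measure.rnDeriv_lt_top ν ρ),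
    (hμν.trans hνρ).ae_le (Measure.rnDeriv_mul_rnDeriv hμν)]
    with x hμν_pos hμν_lt hνρ_pos hνρ_lt hmul
  rw [llr, llr, llr, ← hmul, Pi.mul_apply, ENNReal.toReal_mul,
    Real.log_mul (ENNReal.toReal_pos hμν_pos.ne' hμν_lt.ne).ne'
      (ENNReal.toReal_pos hνρ_pos.ne' hνρ_lt.ne).ne']

lemma absolutelyContinuous_of_ae_rnDeriv_pos [SigmaFinite ν] [SigmaFinite ρ] (hνρ : ν ≪ ρ)
    (hμρ : μ ≪ ρ) (hpos : ∀ᵐ x ∂μ, 0 < ν.rnDeriv ρ x) : μ ≪ ν := by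
  refine Measure.AbsolutelyContinuous.mk fun s hs hνs => ?_
  have hzero : ∀ᵐ x ∂ρ, x ∈ s → ν.rnDeriv ρ x = 0 := by
    rw [← setLIntegral_eq_zero_iff hs (Measure.measurable_rnDeriv ν ρ),
      Measure.setLIntegral_rnDeriv' hνρ hs, hνs]
  rw [measure_eq_zero_iff_ae_notMem]
  filter_upwards [hμρ.ae_le hzero, hpos] with x hx hx_pos hxs
  exact hx_pos.ne' (hx hxs)

lemma klDivE_of_not_absolutelyContinuous (h : ¬ μ ≪ ν) : klDivE μ ν = ∞ := by
  simp [klDivE, h]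

lemma mul_top_le_klDivE {s : Set α} (hs : ν s = 0) : μ s * ∞ ≤ klDivE μ ν := by
  by_cases hμs : μ s = 0
  · simp [hμs]
  · rw [klDivE_of_not_absolutelyContinuous fun h => hμs (h hs)]
    exact le_top

lemma klDivE_eq_lintegral_sub [SigmaFinite μ] [IsFiniteMeasure ν] (h : μ ≪ ν) :
    klDivE μ ν = ∫⁻ x, ENNReal.ofReal (llr μ ν x) ∂μ - ∫⁻ x, ENNReal.ofReal (-llr μ ν x) ∂μ := by
  have hneg := lintegral_ofReal_neg_llr_ne_top h
  by_cases hint : Integrable (llr μ ν) μ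
  · rw [klDivE, if_pos ⟨h, hint⟩, integral_eq_lintegral_pos_part_sub_lintegral_neg_part hint,
      ENNReal.ofReal_sub _ ENNReal.toReal_nonneg, ENNReal.ofReal_toReal hneg,
      ENNReal.ofReal_toReal hint.lintegral_lt_top.ne]
  · have hpos : ∫⁻ x, ENNReal.ofReal (llr μ ν x) ∂μ = ∞ := by
      by_contra hpos
      exact hint (integrable_llr_of_lintegral_ofReal_ne_top h hpos)
    rw [klDivE, if_neg (fun h' => hint h'.2), hpos, ENNReal.top_sub hneg]

lemma klDivE_add_lintegral_ofReal_llr_eq [IsProbabilityMeasure μ] [IsProbabilityMeasure ν]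
    [IsProbabilityMeasure ρ] (hνρ : ν ≪ ρ) (hpos : ∀ᵐ x ∂μ, 0 < ν.rnDeriv ρ x) :
    klDivE μ ν + ∫⁻ x, ENNReal.ofReal (llr ν ρ x) ∂μ
      = klDivE μ ρ + ∫⁻ x, ENNReal.ofReal (-llr ν ρ x) ∂μ := by
  by_cases hμρ : μ ≪ ρ
  swap
  · rw [klDivE_of_not_absolutelyContinuous hμρ,
      klDivE_of_not_absolutelyContinuous fun hμν => hμρ (hμν.trans hνρ), top_add, top_add]
  have hμν := absolutelyContinuous_of_ae_rnDeriv_pos hνρ hμρ hpos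
  rw [klDivE_eq_lintegral_sub hμν, klDivE_eq_lintegral_sub hμρ]
  set Ap := ∫⁻ x, ENNReal.ofReal (llr μ ρ x) ∂μ
  set An := ∫⁻ x, ENNReal.ofReal (-llr μ ρ x) ∂μ
  set Bp := ∫⁻ x, ENNReal.ofReal (llr μ ν x) ∂μ
  set Bn := ∫⁻ x, ENNReal.ofReal (-llr μ ν x) ∂μ
  set Cp := ∫⁻ x, ENNReal.ofReal (llr ν ρ x) ∂μ
  set Cn := ∫⁻ x, ENNReal.ofReal (-llr ν ρ x) ∂μ
  have hparts : Ap + Bn + Cn = An + Bp + Cp := by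
    simp only [Ap, An, Bp, Bn, Cp, Cn]
    rw [← lintegral_add_right _ (by fun_prop), ← lintegral_add_right _ (by fun_prop),
      ← lintegral_add_right _ (by fun_prop), ← lintegral_add_right _ (by fun_prop)]
    refine lintegral_congr_ae ?_
    filter_upwards [llr_ae_eq_llr_add_llr hμν hνρ] with x hx
    exact ofReal_add_ofReal_neg_add_ofReal_neg hx
  have hA : An ≤ Ap := lintegral_ofReal_neg_llr_le_lintegral_ofReal_llr hμρ
  have hB : Bn ≤ Bp := lintegral_ofReal_neg_llr_le_lintegral_ofReal_llr hμν
  refine (ENNReal.add_left_inj (ENNReal.add_ne_top.2 ⟨lintegral_ofReal_neg_llr_ne_top hμρ,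
    lintegral_ofReal_neg_llr_ne_top hμν⟩)).1 ?_
  calc Bp - Bn + Cp + (An + Bn) = Bp - Bn + Bn + Cp + An := by ring
    _ = An + Bp + Cp := by rw [tsub_add_cancel_of_le hB]; ring
    _ = Ap + Bn + Cn := hparts.symm
    _ = Ap - An + Cn + (An + Bn) := by nth_rewrite 1 [← tsub_add_cancel_of_le hA]; ring

end

section Bind

variable {α β : Type*} {mα : MeasurableSpace α} {mβ : MeasurableSpace β} {μ : Measure β}
  {κ : β → Measure α}

lemma isProbabilityMeasure_bind [IsProbabilityMeasure μ] (hκ : AEMeasurable κ μ)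
    (hκ_prob : ∀ b, IsProbabilityMeasure (κ b)) : IsProbabilityMeasure (μ.bind κ) :=
  ⟨by simp [Measure.bind_apply MeasurableSet.univ hκ]⟩

lemma absolutelyContinuous_bind_of_lintegral_klDivE_ne_top {ν : Measure α} (hκ : Measurable κ)
    (h : ∫⁻ b, klDivE (κ b) ν ∂μ ≠ ∞) : μ.bind κ ≪ ν := by
  refine Measure.AbsolutelyContinuous.mk fun s hs hνs => ?_
  rw [Measure.bind_apply hs hκ.aemeasurable]
  have hle : (∫⁻ b, κ b s ∂μ) * ∞ ≤ ∫⁻ b, klDivE (κ b) ν ∂μ := by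
    rw [← lintegral_mul_const _ (Measure.measurable_measure.1 hκ s hs)]
    exact lintegral_mono fun b => mul_top_le_klDivE hνs
  by_contra hne
  exact h (top_le_iff.1 (ENNReal.mul_top hne ▸ hle))

end Bind

theorem expected_posterior_minimizes_expected_kl
    {Z H : Type*} [MeasurableSpace Z] [MeasurableSpace H]
    {n : ℕ}
    (Q : (Fin n → Z) → Measure H) (hQmeas : Measurable Q)
    (hQprob : ∀ S, IsProbabilityMeasure (Q S))
    (D : Measure Z) [IsProbabilityMeasure D]
    (P' : Measure H) [IsProbabilityMeasure P'] :
    ∫⁻ S, klDivE (Q S) ((Measure.pi fun _ : Fin n => D).bind Q)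
        ∂(Measure.pi fun _ : Fin n => D) ≤
      ∫⁻ S, klDivE (Q S) P' ∂(Measure.pi fun _ : Fin n => D) := by
  set μ := Measure.pi fun _ : Fin n => D
  set P := μ.bind Q
  have hP : IsProbabilityMeasure P := isProbabilityMeasure_bind hQmeas.aemeasurable hQprob
  by_cases hfin : ∫⁻ S, klDivE (Q S) P' ∂μ = ∞
  · exact hfin ▸ le_top
  have hPP' : P ≪ P' := absolutelyContinuous_bind_of_lintegral_klDivE_ne_top hQmeas hfin
  have hcomp : ∀ᵐ S ∂μ, klDivE (Q S) P + ∫⁻ x, ENNReal.ofReal (llr P P' x) ∂Q S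
      = klDivE (Q S) P' + ∫⁻ x, ENNReal.ofReal (-llr P P' x) ∂Q S := by
    filter_upwards [Measure.ae_ae_of_ae_bind hQmeas.aemeasurable (Measure.rnDeriv_pos hPP')]
      with S hS
    exact klDivE_add_lintegral_ofReal_llr_eq hPP' hS
  have hintegrated : ∫⁻ S, klDivE (Q S) P ∂μ + ∫⁻ x, ENNReal.ofReal (llr P P' x) ∂P
      = ∫⁻ S, klDivE (Q S) P' ∂μ + ∫⁻ x, ENNReal.ofReal (-llr P P' x) ∂P := by
    rw [Measure.lintegral_bind hQmeas.aemeasurable (by fun_prop),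
      Measure.lintegral_bind hQmeas.aemeasurable (by fun_prop),
      ← lintegral_add_right _ (by fun_prop), ← lintegral_add_right _ (by fun_prop)]
    exact lintegral_congr_ae hcomp
  refine (ENNReal.add_le_add_iff_right (lintegral_ofReal_neg_llr_ne_top hPP')).1 ?_
  calc ∫⁻ S, klDivE (Q S) P ∂μ + ∫⁻ x, ENNReal.ofReal (-llr P P' x) ∂P
      ≤ ∫⁻ S, klDivE (Q S) P ∂μ + ∫⁻ x, ENNReal.ofReal (llr P P' x) ∂P :=
        add_le_add le_rfl (lintegral_ofReal_neg_llr_le_lintegral_ofReal_llr hPP')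
    _ = _ := hintegrated
end

section
/- Let β, δ ∈ (0,1), m < n, J ⊆ [n] a fixed subset of size m, D a probability distribution on Z, and P : Z^m → P(H) a measurable probability kernel. Then with probability at least 1−δ over S ∼ D^n, simultaneously for all probability distributions Q on H: L_D(Q) ≤ (1/β)·L̂_{S∖S_J}(Q) + (KL(Q‖P(S_J)) + log(1/δ))/(2β(1−β)·(n−m)), where the empirical risk is computed only on the complementary subsequence S∖S_J, which is independent of the data S_J used to choose the prior. -/
open MeasureTheory Set
open scoped ENNReal NNReal

noncomputable def gibbsRisk {H Z : Type*} [MeasurableSpace H] [MeasurableSpace Z]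
    (ℓ : H → Z → ℝ) (D : Measure Z) (Q : Measure H) : ℝ :=
  ∫ h, ∫ z, ℓ h z ∂D ∂Q

-- Empirical risk of a Gibbs classifier `Q` on the subsequence `S∖S_J` of the
-- sample `S` with indices outside `J` (of size `n − m` when `|J| = m`).
noncomputable def gibbsEmpRiskCompl {H Z : Type*} [MeasurableSpace H]
    (ℓ : H → Z → ℝ) {n : ℕ} (J : Finset (Fin n)) (S : Fin n → Z) (Q : Measure H) : ℝ :=
  ∫ h, (∑ i ∈ Jᶜ, ℓ h (S i)) / (n - J.card : ℝ) ∂Q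

/-! With `k = n - m` held-out points, the bound `exp (-2(1-β)x) ≤ 1 - 2β(1-β)x` on `[0,1]`
shows that for every fixed hypothesis `h` the held-out sample satisfies
`E exp (2(1-β)(kβ L_D(h) - ∑_{i ∉ J} ℓ(h, z_i))) ≤ 1`. The prior depends only on `S_J`, which is
independent of the held-out points, so Fubini gives `E_S ∫ exp f_S dP(S_J) ≤ 1` for
`f_S = 2β(1-β)k (L_D - L̂_{S∖S_J} / β)`, and by Markov `∫ exp f_S dP(S_J) ≤ 1/δ` with probability
at least `1 - δ`. On that event the Donsker–Varadhan inequality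
`∫ f dQ ≤ KL(Q‖P) + log ∫ exp f dP` yields the bound for all `Q` simultaneously. -/

open Real

theorem Real.exp_neg_le_one_sub_add_sq_div_two {t : ℝ} (ht : 0 ≤ t) :
    exp (-t) ≤ 1 - t + t ^ 2 / 2 := by
  rw [exp_neg, inv_le_iff_one_le_mul₀' (exp_pos t)]
  calc (1 : ℝ) ≤ (1 + t + t ^ 2 / 2) * (1 - t + t ^ 2 / 2) := by nlinarith [pow_nonneg ht 4]
    _ ≤ exp t * (1 - t + t ^ 2 / 2) := by
      gcongr
      · nlinarith [sq_nonneg (t - 1)]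
      · exact quadratic_le_exp_of_nonneg ht

theorem Real.exp_neg_two_mul_one_sub_mul_le {β x : ℝ} (hβ : β ≤ 1) (hx₀ : 0 ≤ x) (hx₁ : x ≤ 1) :
    exp (-(2 * (1 - β) * x)) ≤ 1 - 2 * (1 - β) * β * x := by
  have hx2 : x ^ 2 ≤ x := by nlinarith
  calc exp (-(2 * (1 - β) * x)) ≤ 1 - 2 * (1 - β) * x + (2 * (1 - β) * x) ^ 2 / 2 :=
        exp_neg_le_one_sub_add_sq_div_two (by nlinarith)
    _ ≤ 1 - 2 * (1 - β) * β * x := by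
        nlinarith [mul_le_mul_of_nonneg_left hx2 (sq_nonneg (1 - β))]

theorem ENNReal.ofReal_le_ofReal_add_ofReal_mul_sub_div {a b c : ℝ} (hc : 0 < c) :
    ENNReal.ofReal a ≤ ENNReal.ofReal b + ENNReal.ofReal (c * (a - b)) / ENNReal.ofReal c := by
  rw [ENNReal.ofReal_mul hc.le, mul_comm,
    ENNReal.mul_div_cancel_right (ENNReal.ofReal_pos.2 hc).ne' ENNReal.ofReal_ne_top]
  calc ENNReal.ofReal a = ENNReal.ofReal (b + (a - b)) := by rw [add_sub_cancel]
    _ ≤ _ := ENNReal.ofReal_add_le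

theorem Measurable.lintegral_measure_prod_right {α β : Type*} [MeasurableSpace α]
    [MeasurableSpace β] {P : α → Measure β} (hP : Measurable P) [∀ a, IsProbabilityMeasure (P a)]
    {f : α → β → ℝ≥0∞} (hf : Measurable (Function.uncurry f)) :
    Measurable fun a => ∫⁻ b, f a b ∂P a := by
  have : ProbabilityTheory.IsMarkovKernel ⟨P, hP⟩ := ⟨‹_›⟩
  exact hf.lintegral_kernel_prod_right (κ := ⟨P, hP⟩)

theorem ofReal_one_sub_le_measure_setOf_le {α : Type*} [MeasurableSpace α] {μ : Measure α}
    [IsProbabilityMeasure μ] {F : α → ℝ≥0∞} (hF : AEMeasurable F μ) (hF_le : ∫⁻ x, F x ∂μ ≤ 1)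
    {δ : ℝ} (hδ : 0 < δ) :
    ENNReal.ofReal (1 - δ) ≤ μ {x | F x ≤ ENNReal.ofReal (1 / δ)} := by
  have h_inv : (ENNReal.ofReal (1 / δ))⁻¹ = ENNReal.ofReal δ := by
    rw [one_div, ← ENNReal.ofReal_inv_of_pos (inv_pos.2 hδ), inv_inv]
  have h_tail : μ {x | F x ≤ ENNReal.ofReal (1 / δ)}ᶜ ≤ ENNReal.ofReal δ :=
    calc μ {x | F x ≤ ENNReal.ofReal (1 / δ)}ᶜ ≤ μ {x | ENNReal.ofReal (1 / δ) ≤ F x} :=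
          measure_mono fun x (hx : ¬F x ≤ _) => (not_le.1 hx).le
      _ ≤ (∫⁻ x, F x ∂μ) / ENNReal.ofReal (1 / δ) :=
          meas_ge_le_lintegral_div hF (by simp [hδ]) ENNReal.ofReal_ne_top
      _ ≤ ENNReal.ofReal δ := by rw [← h_inv, ← one_div]; gcongr
  rw [ENNReal.ofReal_sub _ hδ.le, ENNReal.ofReal_one, tsub_le_iff_right, ← measure_univ (μ := μ)]
  exact (measure_univ_le_add_compl _).trans (by gcongr)

section ExponentialMoment

variable {Z : Type*} [MeasurableSpace Z] {D : Measure Z} [IsProbabilityMeasure D]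

theorem integrable_exp_neg_two_mul_one_sub {g : Z → ℝ} (hg : Measurable g)
    (hg01 : ∀ z, g z ∈ Icc (0 : ℝ) 1) {β : ℝ} (hβ : β ≤ 1) :
    Integrable (fun z => exp (-(2 * (1 - β) * g z))) D :=
  .of_mem_Icc 0 1 (by fun_prop) (ae_of_all _ fun z => ⟨(exp_pos _).le, exp_le_one_iff.2
    (by nlinarith [(hg01 z).1])⟩)

theorem integral_exp_neg_two_mul_one_sub_le {g : Z → ℝ} (hg : Measurable g)
    (hg01 : ∀ z, g z ∈ Icc (0 : ℝ) 1) {β : ℝ} (hβ : β ≤ 1) :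
    ∫ z, exp (-(2 * (1 - β) * g z)) ∂D ≤ exp (-(2 * (1 - β) * β * ∫ z, g z ∂D)) := by
  have hg_int : Integrable g D := .of_mem_Icc 0 1 hg.aemeasurable (ae_of_all _ hg01)
  calc ∫ z, exp (-(2 * (1 - β) * g z)) ∂D ≤ ∫ z, (1 - 2 * (1 - β) * β * g z) ∂D :=
        integral_mono (integrable_exp_neg_two_mul_one_sub hg hg01 hβ)
          ((integrable_const 1).sub (hg_int.const_mul _)) fun z =>
            exp_neg_two_mul_one_sub_mul_le hβ (hg01 z).1 (hg01 z).2
    _ = 1 - 2 * (1 - β) * β * ∫ z, g z ∂D := by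
        rw [integral_sub (integrable_const 1) (hg_int.const_mul _), integral_const_mul]
        simp
    _ ≤ exp (-(2 * (1 - β) * β * ∫ z, g z ∂D)) := by
        linarith [add_one_le_exp (-(2 * (1 - β) * β * ∫ z, g z ∂D))]

theorem lintegral_pi_exp_mul_sub_sum_le_one {ι : Type*} [Fintype ι] {g : Z → ℝ}
    (hg : Measurable g) (hg01 : ∀ z, g z ∈ Icc (0 : ℝ) 1) {β : ℝ} (hβ : β ≤ 1) :
    ∫⁻ x, ENNReal.ofReal (exp (2 * (1 - β) *
        (Fintype.card ι * β * ∫ z, g z ∂D - ∑ i, g (x i)))) ∂Measure.pi (fun _ : ι => D) ≤ 1 := by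
  set m := ∫ z, g z ∂D
  have h_factor : ∀ x : ι → Z, exp (2 * (1 - β) * (Fintype.card ι * β * m - ∑ i, g (x i))) =
      exp (2 * (1 - β) * Fintype.card ι * β * m) * ∏ i, exp (-(2 * (1 - β) * g (x i))) := by
    intro x
    rw [← exp_sum, ← exp_add, Finset.sum_neg_distrib, ← Finset.mul_sum]
    ring_nf
  have h_prod_int : Integrable (fun x : ι → Z => ∏ i, exp (-(2 * (1 - β) * g (x i))))
      (Measure.pi fun _ => D) :=
    Integrable.fintype_prod (f := fun _ z => exp (-(2 * (1 - β) * g z))) fun _ =>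
      integrable_exp_neg_two_mul_one_sub hg hg01 hβ
  simp_rw [h_factor]
  rw [← ofReal_integral_eq_lintegral_ofReal (h_prod_int.const_mul _)
    (ae_of_all _ fun x => by positivity), ENNReal.ofReal_le_one, integral_const_mul,
    integral_fintype_prod_eq_pow (fun z => exp (-(2 * (1 - β) * g z)))]
  calc exp (2 * (1 - β) * Fintype.card ι * β * m) *
        (∫ z, exp (-(2 * (1 - β) * g z)) ∂D) ^ Fintype.card ι
      ≤ exp (2 * (1 - β) * Fintype.card ι * β * m) *
        exp (-(2 * (1 - β) * β * m)) ^ Fintype.card ι := by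
        gcongr
        exact integral_exp_neg_two_mul_one_sub_le hg hg01 hβ
    _ = 1 := by rw [← exp_nat_mul, ← exp_add]; ring_nf; exact exp_zero

theorem lintegral_lintegral_prior_le_one {H ι : Type*} [MeasurableSpace H] [Fintype ι]
    [DecidableEq ι] (J : Finset ι) (P : ({i // i ∈ J} → Z) → Measure H)
    [∀ x, IsProbabilityMeasure (P x)]
    (G : ({i // i ∉ J} → Z) → H → ℝ≥0∞) (hG : Measurable (Function.uncurry G))
    (hG_le : ∀ h, ∫⁻ y, G y h ∂Measure.pi (fun _ => D) ≤ 1) :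
    ∫⁻ x, ∫⁻ h, G (fun i => x i.1) h ∂P (fun i => x i.1) ∂Measure.pi (fun _ => D) ≤ 1 := by
  rw [← (measurePreserving_piEquivPiSubtypeProd (fun _ => D) (· ∈ J)).symm.lintegral_comp_emb
    (MeasurableEquiv.measurableEmbedding _)]
  refine (lintegral_prod_le _).trans ?_
  set e := MeasurableEquiv.piEquivPiSubtypeProd (fun _ : ι => Z) (· ∈ J)
  have h_fst : ∀ a b (i : {i // i ∈ J}), e.symm (a, b) i = a i := by simp [e]
  have h_snd : ∀ a b (i : {i // i ∉ J}), e.symm (a, b) i = b i := fun a b i => by simp [e, i.2]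
  simp only [h_fst, h_snd]
  refine (lintegral_mono (g := fun _ => 1) fun a => ?_).trans_eq (by simp)
  rw [lintegral_lintegral_swap hG.aemeasurable]
  exact (lintegral_mono (g := fun _ => 1) hG_le).trans_eq (by simp)

end ExponentialMoment

section ChangeOfMeasure

variable {H : Type*} [MeasurableSpace H] {Q P : Measure H} [IsProbabilityMeasure Q]
  [IsProbabilityMeasure P] {f : H → ℝ}

theorem integral_le_integral_llr_add_log_integral_exp (hQP : Q ≪ P)
    (h_llr : Integrable (llr Q P) Q) (hfQ : Integrable f Q)
    (hfP : Integrable (fun h => exp (f h)) P) :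
    ∫ h, f h ∂Q ≤ ∫ h, llr Q P h ∂Q + log (∫ h, exp (f h) ∂P) := by
  have := isProbabilityMeasure_tilted hfP
  -- Gibbs' inequality for `Q` against `P.tilted f`, whose log-likelihood ratio with respect to
  -- `Q` is `llr Q P - f + log ∫ exp f dP`.
  have h_gibbs := InformationTheory.integral_llr_add_sub_measure_univ_nonneg
    (hQP.trans (absolutelyContinuous_tilted hfP)) (integrable_llr_tilted_right hQP hfQ h_llr hfP)
  rw [integral_llr_tilted_right hQP hfQ hfP h_llr] at h_gibbs
  simp only [probReal_univ] at h_gibbs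
  linarith

theorem ofReal_integral_le_klDivE_add_log (hfQ : Integrable f Q)
    (hfP : Integrable (fun h => exp (f h)) P) {t : ℝ}
    (ht : ∫⁻ h, ENNReal.ofReal (exp (f h)) ∂P ≤ ENNReal.ofReal t) :
    ENNReal.ofReal (∫ h, f h ∂Q) ≤ klDivE Q P + ENNReal.ofReal (log t) := by
  by_cases h_fin : Q ≪ P ∧ Integrable (llr Q P) Q
  · have h_pos : 0 < ∫ h, exp (f h) ∂P := integral_exp_pos hfP
    rw [← ofReal_integral_eq_lintegral_ofReal hfP (ae_of_all _ fun h => (exp_pos _).le)] at ht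
    have ht' := (ENNReal.ofReal_le_ofReal_iff'.1 ht).resolve_right h_pos.not_ge
    rw [klDivE, if_pos h_fin]
    refine (ENNReal.ofReal_le_ofReal ?_).trans ENNReal.ofReal_add_le
    linarith [integral_le_integral_llr_add_log_integral_exp h_fin.1 h_fin.2 hfQ hfP,
      log_le_log h_pos ht']
  · simp [klDivE, if_neg h_fin]

end ChangeOfMeasure

section Risk

variable {Z H : Type*} {ℓ : H → Z → ℝ} {n : ℕ} {J : Finset (Fin n)}

noncomputable def empRiskCompl (ℓ : H → Z → ℝ) {n : ℕ} (J : Finset (Fin n)) (S : Fin n → Z)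
    (h : H) : ℝ :=
  (∑ i ∈ Jᶜ, ℓ h (S i)) / (n - J.card : ℝ)

theorem empRiskCompl_mem_Icc (hℓ : ∀ h z, ℓ h z ∈ Icc (0 : ℝ) 1) (S : Fin n → Z) (h : H) :
    empRiskCompl ℓ J S h ∈ Icc (0 : ℝ) 1 := by
  have h_nonneg : 0 ≤ ∑ i ∈ Jᶜ, ℓ h (S i) := Finset.sum_nonneg fun i _ => (hℓ h _).1
  have h_le : ∑ i ∈ Jᶜ, ℓ h (S i) ≤ n - J.card :=
    calc ∑ i ∈ Jᶜ, ℓ h (S i) ≤ ∑ _i ∈ Jᶜ, (1 : ℝ) := Finset.sum_le_sum fun i _ => (hℓ h _).2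
      _ = n - J.card := by
        simp [Finset.card_compl, Nat.cast_sub (J.card_le_univ.trans_eq (Fintype.card_fin n))]
  exact ⟨div_nonneg h_nonneg (h_nonneg.trans h_le), div_le_one_of_le₀ h_le (h_nonneg.trans h_le)⟩

variable [MeasurableSpace Z] {D : Measure Z}

noncomputable def risk (ℓ : H → Z → ℝ) (D : Measure Z) (h : H) : ℝ :=
  ∫ z, ℓ h z ∂D

theorem mul_risk_sub_empRiskCompl_eq {β : ℝ} (hβ : β ≠ 0) (hJ : J.card < n) (S : Fin n → Z)
    (h : H) :
    2 * β * (1 - β) * (n - J.card : ℝ) * (risk ℓ D h - 1 / β * empRiskCompl ℓ J S h) =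
      2 * (1 - β) * (Fintype.card {i // i ∉ J} * β * risk ℓ D h -
        ∑ i : {i // i ∉ J}, ℓ h (S i)) := by
  have h_card : (Fintype.card {i // i ∉ J} : ℝ) = n - J.card := by
    simp [Fintype.card_subtype_compl, Nat.cast_sub (J.card_le_univ.trans_eq (Fintype.card_fin n))]
  have h_pos : (0 : ℝ) < n - J.card := sub_pos.2 (by exact_mod_cast hJ)
  rw [h_card, empRiskCompl, Finset.sum_subtype Jᶜ (p := (· ∉ J)) (fun _ => Finset.mem_compl)]
  field_simp

variable [MeasurableSpace H]

theorem measurable_risk [SFinite D] (hℓ_meas : Measurable (Function.uncurry ℓ)) :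
    Measurable (risk ℓ D) :=
  hℓ_meas.stronglyMeasurable.integral_prod_right'.measurable

theorem measurable_empRiskCompl (hℓ_meas : Measurable (Function.uncurry ℓ)) :
    Measurable (Function.uncurry (empRiskCompl ℓ J)) :=
  (Finset.measurable_sum _ fun i _ => hℓ_meas.comp
    (measurable_snd.prodMk ((measurable_pi_apply i).comp measurable_fst))).div_const _

theorem integrable_empRiskCompl (hℓ_meas : Measurable (Function.uncurry ℓ))
    (hℓ : ∀ h z, ℓ h z ∈ Icc (0 : ℝ) 1) (S : Fin n → Z) (μ : Measure H) [IsFiniteMeasure μ] :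
    Integrable (empRiskCompl ℓ J S) μ :=
  .of_mem_Icc 0 1 ((measurable_empRiskCompl hℓ_meas).comp measurable_prodMk_left).aemeasurable
    (ae_of_all _ (empRiskCompl_mem_Icc hℓ S))

variable [IsProbabilityMeasure D] {β : ℝ}

theorem risk_mem_Icc (hℓ_meas : Measurable (Function.uncurry ℓ))
    (hℓ : ∀ h z, ℓ h z ∈ Icc (0 : ℝ) 1) (h : H) : risk ℓ D h ∈ Icc (0 : ℝ) 1 :=
  (convex_Icc 0 1).integral_mem isClosed_Icc (ae_of_all _ (hℓ h))
    (.of_mem_Icc 0 1 (hℓ_meas.comp measurable_prodMk_left).aemeasurable (ae_of_all _ (hℓ h)))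

theorem integrable_risk (hℓ_meas : Measurable (Function.uncurry ℓ))
    (hℓ : ∀ h z, ℓ h z ∈ Icc (0 : ℝ) 1) (μ : Measure H) [IsFiniteMeasure μ] :
    Integrable (risk ℓ D) μ :=
  .of_mem_Icc 0 1 (measurable_risk hℓ_meas).aemeasurable (ae_of_all _ (risk_mem_Icc hℓ_meas hℓ))

theorem integral_risk_sub_empRiskCompl (hℓ_meas : Measurable (Function.uncurry ℓ))
    (hℓ : ∀ h z, ℓ h z ∈ Icc (0 : ℝ) 1) (b : ℝ) (S : Fin n → Z) (Q : Measure H)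
    [IsProbabilityMeasure Q] :
    ∫ h, (risk ℓ D h - b * empRiskCompl ℓ J S h) ∂Q =
      gibbsRisk ℓ D Q - b * gibbsEmpRiskCompl ℓ J S Q := by
  rw [integral_sub (integrable_risk hℓ_meas hℓ Q)
    ((integrable_empRiskCompl hℓ_meas hℓ S Q).const_mul b), integral_const_mul]
  rfl

theorem lintegral_lintegral_exp_mul_risk_sub_empRiskCompl_le_one
    (hℓ_meas : Measurable (Function.uncurry ℓ)) (hℓ : ∀ h z, ℓ h z ∈ Icc (0 : ℝ) 1)
    (hβ : β ∈ Ioo (0 : ℝ) 1) (hJ : J.card < n) (P : ({i // i ∈ J} → Z) → Measure H)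
    [∀ x, IsProbabilityMeasure (P x)] :
    ∫⁻ S, ∫⁻ h, ENNReal.ofReal (exp (2 * β * (1 - β) * (n - J.card : ℝ) *
      (risk ℓ D h - 1 / β * empRiskCompl ℓ J S h))) ∂P (fun i => S i.1)
      ∂Measure.pi (fun _ => D) ≤ 1 := by
  simp only [mul_risk_sub_empRiskCompl_eq hβ.1.ne' hJ]
  refine lintegral_lintegral_prior_le_one J P
    (fun y h => ENNReal.ofReal (exp (2 * (1 - β) *
      (Fintype.card {i // i ∉ J} * β * risk ℓ D h - ∑ i, ℓ h (y i))))) ?_ fun h => ?_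
  · have h_loss : ∀ i, Measurable fun p : ({i // i ∉ J} → Z) × H => ℓ p.2 (p.1 i) :=
      fun i => hℓ_meas.comp (measurable_snd.prodMk ((measurable_pi_apply i).comp measurable_fst))
    exact ((((measurable_risk hℓ_meas).comp measurable_snd).const_mul _).sub
      (Finset.measurable_sum _ fun i _ => h_loss i)).const_mul _ |>.exp.ennreal_ofReal
  · exact lintegral_pi_exp_mul_sub_sum_le_one (hℓ_meas.comp measurable_prodMk_left) (hℓ h) hβ.2.le

theorem ofReal_gibbsRisk_le_of_lintegral_exp_le (hℓ_meas : Measurable (Function.uncurry ℓ))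
    (hℓ : ∀ h z, ℓ h z ∈ Icc (0 : ℝ) 1) (hβ : 0 < β) {c : ℝ} (hc : 0 < c) {S : Fin n → Z}
    {P : Measure H} [IsProbabilityMeasure P] {t : ℝ}
    (ht : ∫⁻ h, ENNReal.ofReal (exp (c * (risk ℓ D h - 1 / β * empRiskCompl ℓ J S h))) ∂P ≤
      ENNReal.ofReal t)
    (Q : Measure H) [IsProbabilityMeasure Q] :
    ENNReal.ofReal (gibbsRisk ℓ D Q) ≤ ENNReal.ofReal (1 / β * gibbsEmpRiskCompl ℓ J S Q) +
      (klDivE Q P + ENNReal.ofReal (log t)) / ENNReal.ofReal c := by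
  have h_gap_le : ∀ h, c * (risk ℓ D h - 1 / β * empRiskCompl ℓ J S h) ≤ c := by
    intro h
    have := mul_nonneg (one_div_pos.2 hβ).le (empRiskCompl_mem_Icc hℓ S h (J := J)).1
    exact mul_le_of_le_one_right hc.le (by linarith [(risk_mem_Icc hℓ_meas hℓ h (D := D)).2])
  have h_gap_int : ∀ μ : Measure H, [IsFiniteMeasure μ] →
      Integrable (fun h => c * (risk ℓ D h - 1 / β * empRiskCompl ℓ J S h)) μ := fun μ _ =>
    ((integrable_risk hℓ_meas hℓ μ).sub
      ((integrable_empRiskCompl hℓ_meas hℓ S μ).const_mul _)).const_mul c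
  have h_exp_int :
      Integrable (fun h => exp (c * (risk ℓ D h - 1 / β * empRiskCompl ℓ J S h))) P :=
    .of_mem_Icc 0 (exp c) (h_gap_int P).aemeasurable.exp
      (ae_of_all _ fun h => ⟨(exp_pos _).le, exp_le_exp.2 (h_gap_le h)⟩)
  calc ENNReal.ofReal (gibbsRisk ℓ D Q)
      ≤ ENNReal.ofReal (1 / β * gibbsEmpRiskCompl ℓ J S Q) + ENNReal.ofReal
          (c * (gibbsRisk ℓ D Q - 1 / β * gibbsEmpRiskCompl ℓ J S Q)) / ENNReal.ofReal c :=
        ENNReal.ofReal_le_ofReal_add_ofReal_mul_sub_div hc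
    _ ≤ _ := by
        rw [← integral_risk_sub_empRiskCompl hℓ_meas hℓ, ← integral_const_mul]
        gcongr
        exact ofReal_integral_le_klDivE_add_log (h_gap_int Q) h_exp_int ht

end Risk

theorem linear_pac_bayes_bound_data_dependent_prior
    {Z H : Type*} [MeasurableSpace Z] [MeasurableSpace H]
    (ℓ : H → Z → ℝ) (hℓmeas : Measurable (Function.uncurry ℓ))
    (hℓ : ∀ h z, ℓ h z ∈ Icc (0 : ℝ) 1)
    {β δ : ℝ} (hβ : β ∈ Ioo (0 : ℝ) 1) (hδ : δ ∈ Ioo (0 : ℝ) 1)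
    {n m : ℕ} (hm : m < n) (J : Finset (Fin n)) (hJ : J.card = m)
    (D : Measure Z) [IsProbabilityMeasure D]
    (P : ({i : Fin n // i ∈ J} → Z) → Measure H) (hPmeas : Measurable P)
    (hPprob : ∀ x, IsProbabilityMeasure (P x)) :
    ENNReal.ofReal (1 - δ) ≤
      (Measure.pi fun _ : Fin n => D)
        {S | ∀ Q : Measure H, IsProbabilityMeasure Q →
          ENNReal.ofReal (gibbsRisk ℓ D Q) ≤
            ENNReal.ofReal ((1 / β) * gibbsEmpRiskCompl ℓ J S Q) +
              (klDivE Q (P fun i => S i.1) + ENNReal.ofReal (Real.log (1 / δ))) /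
                ENNReal.ofReal (2 * β * (1 - β) * (n - m : ℝ))} := by
  subst hJ
  have := hPprob
  have hc : 0 < 2 * β * (1 - β) * (n - J.card : ℝ) :=
    mul_pos (mul_pos (mul_pos two_pos hβ.1) (sub_pos.2 hβ.2)) (sub_pos.2 (by exact_mod_cast hm))
  have hF_meas : Measurable fun S : Fin n → Z => ∫⁻ h, ENNReal.ofReal (exp
      (2 * β * (1 - β) * (n - J.card : ℝ) * (risk ℓ D h - 1 / β * empRiskCompl ℓ J S h)))
      ∂P (fun i => S i.1) :=
    Measurable.lintegral_measure_prod_right (P := fun S : Fin n → Z => P fun i => S i.1)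
      (hPmeas.comp (by fun_prop))
      ((((measurable_risk hℓmeas).comp measurable_snd).sub
        ((measurable_empRiskCompl hℓmeas).const_mul _)).const_mul _).exp.ennreal_ofReal
  refine (ofReal_one_sub_le_measure_setOf_le hF_meas.aemeasurable
    (lintegral_lintegral_exp_mul_risk_sub_empRiskCompl_le_one hℓmeas hℓ hβ hm P) hδ.1).trans
    (measure_mono fun S hS Q _ => ?_)
  exact ofReal_gibbsRisk_le_of_lintegral_exp_le hℓmeas hℓ hβ.1 hc hS Q
end
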